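/- arXiv:2404.01712 — 3 statements merged into one kernel-verified Lean document; each statement's English description precedes it below -/
import Mathlib

section
/- Let η > 0, G ≥ 0, β > 0, let B ≥ 1 and E ≥ 0 be natural numbers, set T = (E+1)B, fix a natural number b with b < B, and let q, ρ be reals with 0 < q < 1 and q < ρ. Suppose e : ℕ → ℝ satisfies e(0) = 0 and, for all t < T, e(t+1) ≤ ρ · e(t) + (2 η² G / (1 − q)) · (q^t − q^{2t}) + s(t), where s(t) = (2 η G / β) · q^t if t mod B = b and s(t) = 0 otherwise. Then e(T) ≤ (2 η² G / (1 − q)) · ( (ρ^T − q^T)/(ρ − q) − (ρ^T − q^{2T})/(ρ − q²) ) + (2 η G / β) · ρ^{B−b−1} q^b (ρ^T − q^T)/(ρ^B − q^B), and consequently e(T) ≤ 2 η G (ρ^T − q^{2T}) · ( η q / ((ρ − q)(ρ − q²)) + 1/(β (ρ − q)) ). -/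
open Finset

private lemma unroll_aux (ρ : ℝ) (hρ : 0 ≤ ρ) (u e : ℕ → ℝ) (he0 : e 0 = 0) :
    ∀ T : ℕ, (∀ t < T, e (t + 1) ≤ ρ * e t + u t) →
      e T ≤ ∑ i ∈ range T, ρ ^ (T - 1 - i) * u i := by
  intro T
  induction T with
  | zero => intro _; simp [he0]
  | succ n ih =>
    intro hrec
    have h1 : e n ≤ ∑ i ∈ range n, ρ ^ (n - 1 - i) * u i :=
      ih fun t ht => hrec t (ht.trans (Nat.lt_succ_self n))
    have h2 := hrec n (Nat.lt_succ_self n)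
    have h3 := mul_le_mul_of_nonneg_left h1 hρ
    have h4 : ρ * (∑ i ∈ range n, ρ ^ (n - 1 - i) * u i) + u n
        = ∑ i ∈ range (n + 1), ρ ^ (n + 1 - 1 - i) * u i := by
      rw [Finset.sum_range_succ, Finset.mul_sum]
      simp only [Nat.add_sub_cancel, Nat.sub_self, pow_zero, one_mul]
      congr 1
      apply Finset.sum_congr rfl
      intro i hi
      have hi' : i < n := Finset.mem_range.mp hi
      have hni : n - i = (n - 1 - i) + 1 := by omega
      rw [hni, pow_succ]
      ring
    linarith
  
private lemma sum_block_aux (g : ℕ → ℝ) (B : ℕ) :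
    ∀ n : ℕ, ∑ i ∈ range (n * B), g i
      = ∑ k ∈ range n, ∑ r ∈ range B, g (k * B + r) := by
  intro n
  induction n with
  | zero => simp
  | succ m ih =>
    rw [Finset.sum_range_succ, ← ih, Nat.succ_mul, Finset.sum_range_add]

private lemma geom_aux (x y : ℝ) (h : x ≠ y) (n : ℕ) :
    ∑ i ∈ range n, y ^ (n - 1 - i) * x ^ i = (y ^ n - x ^ n) / (y - x) := by
  have h2 : y - x ≠ 0 := sub_ne_zero.mpr (Ne.symm h)
  rw [eq_div_iff h2]
  have hs : (∑ i ∈ range n, y ^ (n - 1 - i) * x ^ i)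
      = ∑ i ∈ range n, x ^ i * y ^ (n - 1 - i) :=
    Finset.sum_congr rfl fun i _ => mul_comm _ _
  rw [hs]
  linear_combination (-1 : ℝ) * geom_sum₂_mul x y n

/-- **Unlearning Guarantee** (Theorem 4.3), quantitative form: closed-form and
simplified bounds on the approximation error after `T = (E+1)B` SGD updates. -/
theorem unlearning_guarantee
    (η G β : ℝ) (hη : 0 < η) (hG : 0 ≤ G) (hβ : 0 < β)
    (B E : ℕ) (hB : 1 ≤ B) (b : ℕ) (hb : b < B)
    (q ρ : ℝ) (hq0 : 0 < q) (hq1 : q < 1) (hqρ : q < ρ)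
    (T : ℕ) (hT : T = (E + 1) * B)
    (e : ℕ → ℝ) (he0 : e 0 = 0)
    (hrec : ∀ t < T, e (t + 1) ≤ ρ * e t
      + (2 * η ^ 2 * G / (1 - q)) * (q ^ t - q ^ (2 * t))
      + (if t % B = b then (2 * η * G / β) * q ^ t else 0)) :
    e T ≤ (2 * η ^ 2 * G / (1 - q)) *
        ((ρ ^ T - q ^ T) / (ρ - q) - (ρ ^ T - q ^ (2 * T)) / (ρ - q ^ 2))
      + (2 * η * G / β) * ρ ^ (B - b - 1) * q ^ b * (ρ ^ T - q ^ T) / (ρ ^ B - q ^ B)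
    ∧ e T ≤ 2 * η * G * (ρ ^ T - q ^ (2 * T)) *
        (η * q / ((ρ - q) * (ρ - q ^ 2)) + 1 / (β * (ρ - q))) := by
  have hρ0 : 0 < ρ := hq0.trans hqρ
  have hρq : 0 < ρ - q := sub_pos.mpr hqρ
  have hq2 : q ^ 2 < q := by nlinarith
  have hρq2 : 0 < ρ - q ^ 2 := by nlinarith
  have h1q : 0 < 1 - q := sub_pos.mpr hq1
  have hBpos : (0:ℕ) < B := hB
  have hqρB : q ^ B < ρ ^ B := pow_lt_pow_left₀ hqρ hq0.le (by omega)
  have hBq : 0 < ρ ^ B - q ^ B := sub_pos.mpr hqρB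
  obtain ⟨c, hc⟩ : ∃ c : ℝ, c = 2 * η ^ 2 * G / (1 - q) := ⟨_, rfl⟩
  obtain ⟨D, hD⟩ : ∃ D : ℝ, D = 2 * η * G / β := ⟨_, rfl⟩
  rw [← hc, ← hD] at hrec ⊢
  have hcpos : 0 ≤ c := by rw [hc]; positivity
  have hDpos : 0 ≤ D := by rw [hD]; positivity
  -- step 1: unrolled bound
  set u : ℕ → ℝ := fun t => c * (q ^ t - q ^ (2 * t))
      + (if t % B = b then D * q ^ t else 0) with hu
  have hunroll : e T ≤ ∑ i ∈ range T, ρ ^ (T - 1 - i) * u i := by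
    apply unroll_aux ρ hρ0.le u e he0 T
    intro t ht
    have := hrec t ht
    simp only [hu]
    linarith
  -- step 2: split the sum
  have hsplit : ∑ i ∈ range T, ρ ^ (T - 1 - i) * u i
      = c * (∑ i ∈ range T, ρ ^ (T - 1 - i) * q ^ i)
        - c * (∑ i ∈ range T, ρ ^ (T - 1 - i) * (q ^ 2) ^ i)
        + ∑ i ∈ range T, ρ ^ (T - 1 - i) * (if i % B = b then D * q ^ i else 0) := by
    rw [Finset.mul_sum, Finset.mul_sum, ← Finset.sum_sub_distrib, ← Finset.sum_add_distrib]
    apply Finset.sum_congr rfl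
    intro i _
    have : q ^ (2 * i) = (q ^ 2) ^ i := by rw [pow_mul]
    simp only [hu, this]
    ring
  -- geometric sums
  have hS1 : ∑ i ∈ range T, ρ ^ (T - 1 - i) * q ^ i = (ρ ^ T - q ^ T) / (ρ - q) :=
    geom_aux q ρ hqρ.ne T
  have hS2 : ∑ i ∈ range T, ρ ^ (T - 1 - i) * (q ^ 2) ^ i
      = (ρ ^ T - q ^ (2 * T)) / (ρ - q ^ 2) := by
    have := geom_aux (q ^ 2) ρ (by nlinarith) T
    rw [this, ← pow_mul, Nat.mul_comm]
  -- the s-sum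
  have hS3 : ∑ i ∈ range T, ρ ^ (T - 1 - i) * (if i % B = b then D * q ^ i else 0)
      = D * ρ ^ (B - 1 - b) * q ^ b * ((ρ ^ T - q ^ T) / (ρ ^ B - q ^ B)) := by
    have hTB : T = (E + 1) * B := hT
    rw [hTB, sum_block_aux]
    have hinner : ∀ k ∈ range (E + 1),
        (∑ r ∈ range B, ρ ^ ((E + 1) * B - 1 - (k * B + r)) *
          (if (k * B + r) % B = b then D * q ^ (k * B + r) else 0))
        = D * ρ ^ (B - 1 - b) * q ^ b * ((ρ ^ B) ^ (E - k) * (q ^ B) ^ k) := by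
      intro k hk
      have hkE : k ≤ E := by have := Finset.mem_range.mp hk; omega
      rw [Finset.sum_eq_single_of_mem b (Finset.mem_range.mpr hb)]
      · have hmod : (k * B + b) % B = b := by
          rw [Nat.add_comm, Nat.mul_comm, Nat.add_mul_mod_self_left, Nat.mod_eq_of_lt hb]
        rw [if_pos hmod]
        have hexp : (E + 1) * B - 1 - (k * B + b) = (E - k) * B + (B - 1 - b) := by
          have h1 : (E - k) * B = E * B - k * B := Nat.sub_mul E k B
          have h2 : (E + 1) * B = E * B + B := by ring
          have h3 : k * B ≤ E * B := Nat.mul_le_mul_right B hkE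
          rw [h1, h2]
          revert h3
          generalize k * B = x
          generalize E * B = y
          intro h3
          omega
        rw [hexp, pow_add, pow_mul', pow_add, pow_mul']
        ring
      · intro r hr hrb
        have hmod : (k * B + r) % B = r := by
          rw [Nat.add_comm, Nat.mul_comm, Nat.add_mul_mod_self_left,
            Nat.mod_eq_of_lt (Finset.mem_range.mp hr)]
        rw [hmod, if_neg hrb, mul_zero]
    rw [Finset.sum_congr rfl hinner, ← Finset.mul_sum]
    have hgeom : ∑ k ∈ range (E + 1), (ρ ^ B) ^ (E - k) * (q ^ B) ^ k
        = ((ρ ^ B) ^ (E + 1) - (q ^ B) ^ (E + 1)) / (ρ ^ B - q ^ B) := by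
      have hne : (q ^ B : ℝ) ≠ ρ ^ B := hqρB.ne
      have := geom_aux (q ^ B) (ρ ^ B) hne (E + 1)
      simp only [Nat.add_sub_cancel] at this
      exact this
    rw [hgeom, ← pow_mul, ← pow_mul]
    have : B * (E + 1) = (E + 1) * B := Nat.mul_comm _ _
    rw [this]
  -- first bound
  have hBb : B - 1 - b = B - b - 1 := by omega
  have hfirst : e T ≤ c * ((ρ ^ T - q ^ T) / (ρ - q) - (ρ ^ T - q ^ (2 * T)) / (ρ - q ^ 2))
      + D * ρ ^ (B - b - 1) * q ^ b * (ρ ^ T - q ^ T) / (ρ ^ B - q ^ B) := by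
    rw [hsplit, hS1, hS2, hS3] at hunroll
    rw [← hBb]
    calc e T ≤ c * ((ρ ^ T - q ^ T) / (ρ - q)) - c * ((ρ ^ T - q ^ (2 * T)) / (ρ - q ^ 2))
          + D * ρ ^ (B - 1 - b) * q ^ b * ((ρ ^ T - q ^ T) / (ρ ^ B - q ^ B)) := hunroll
      _ = c * ((ρ ^ T - q ^ T) / (ρ - q) - (ρ ^ T - q ^ (2 * T)) / (ρ - q ^ 2))
          + D * ρ ^ (B - 1 - b) * q ^ b * (ρ ^ T - q ^ T) / (ρ ^ B - q ^ B) := by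
            ring
  clear hunroll hsplit hS1 hS2 hS3 hrec
  clear_value u
  clear hu u
  refine ⟨hfirst, ?_⟩
  -- second bound: compare the two summands
  have hq2T : q ^ (2 * T) ≤ q ^ T := pow_le_pow_of_le_one hq0.le hq1.le (by omega)
  have hqTρT : q ^ T ≤ ρ ^ T := pow_le_pow_left₀ hq0.le hqρ.le T
  have hA : c * ((ρ ^ T - q ^ T) / (ρ - q) - (ρ ^ T - q ^ (2 * T)) / (ρ - q ^ 2))
      ≤ 2 * η * G * (ρ ^ T - q ^ (2 * T)) * (η * q / ((ρ - q) * (ρ - q ^ 2))) := by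
    have hP : (0:ℝ) < (1 - q) * ((ρ - q) * (ρ - q ^ 2)) := by positivity
    have hL : c * ((ρ ^ T - q ^ T) / (ρ - q) - (ρ ^ T - q ^ (2 * T)) / (ρ - q ^ 2))
        = (2 * η ^ 2 * G * ((ρ - q ^ 2) * (ρ ^ T - q ^ T) - (ρ - q) * (ρ ^ T - q ^ (2 * T))))
          / ((1 - q) * ((ρ - q) * (ρ - q ^ 2))) := by
      rw [hc]
      rw [div_sub_div _ _ hρq.ne' hρq2.ne', div_mul_div_comm]
      rw [div_eq_div_iff (by positivity) (by positivity)]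
      ring
    have hR : 2 * η * G * (ρ ^ T - q ^ (2 * T)) * (η * q / ((ρ - q) * (ρ - q ^ 2)))
        = (2 * η ^ 2 * G * (q * (1 - q) * (ρ ^ T - q ^ (2 * T))))
          / ((1 - q) * ((ρ - q) * (ρ - q ^ 2))) := by
      field_simp
    rw [hL, hR, div_le_div_iff_of_pos_right hP]
    have hkey : 0 ≤ 2 * η ^ 2 * G * (ρ - q ^ 2) * (q ^ T - q ^ (2 * T)) := by
      have : (0:ℝ) ≤ 2 * η ^ 2 * G := by positivity
      exact mul_nonneg (mul_nonneg this hρq2.le) (sub_nonneg.mpr hq2T)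
    nlinarith [hkey]
  have hfrac : ρ ^ (B - b - 1) * q ^ b / (ρ ^ B - q ^ B) ≤ 1 / (ρ - q) := by
    rw [div_le_div_iff₀ hBq hρq]
    have hpow1 : q ^ b ≤ ρ ^ b := pow_le_pow_left₀ hq0.le hqρ.le b
    have hpow2 : ρ ^ (B - b - 1) * ρ ^ b = ρ ^ (B - 1) := by
      rw [← pow_add]
      congr 1
      omega
    have hpow3 : q * q ^ (B - 1) = q ^ B := by
      rw [← pow_succ']
      congr 1
      omega
    have hpow4 : ρ * ρ ^ (B - 1) = ρ ^ B := by
      rw [← pow_succ']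
      congr 1
      omega
    have hpow5 : q ^ (B - 1) ≤ ρ ^ (B - 1) := pow_le_pow_left₀ hq0.le hqρ.le _
    have hint2 : q * q ^ (B - 1) ≤ q * ρ ^ (B - 1) :=
      mul_le_mul_of_nonneg_left hpow5 hq0.le
    have e1 : ρ ^ (B - b - 1) * q ^ b * (ρ - q) ≤ ρ ^ (B - b - 1) * ρ ^ b * (ρ - q) := by
      apply mul_le_mul_of_nonneg_right _ hρq.le
      exact mul_le_mul_of_nonneg_left hpow1 (pow_nonneg hρ0.le _)
    have e2 : ρ ^ (B - b - 1) * ρ ^ b * (ρ - q) = ρ ^ B - q * ρ ^ (B - 1) := by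
      rw [hpow2]
      linear_combination hpow4
    have e3 : q ^ B ≤ q * ρ ^ (B - 1) := by
      rw [← hpow3]
      exact hint2
    linarith [e1, e3]
  have hfracnn : 0 ≤ ρ ^ (B - b - 1) * q ^ b / (ρ ^ B - q ^ B) := by
    apply div_nonneg (by positivity) hBq.le
  have hBnd : D * ρ ^ (B - b - 1) * q ^ b * (ρ ^ T - q ^ T) / (ρ ^ B - q ^ B)
      ≤ 2 * η * G * (ρ ^ T - q ^ (2 * T)) * (1 / (β * (ρ - q))) := by
    have hDTnn : 0 ≤ D * (ρ ^ T - q ^ (2 * T)) :=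
      mul_nonneg hDpos (by linarith)
    calc D * ρ ^ (B - b - 1) * q ^ b * (ρ ^ T - q ^ T) / (ρ ^ B - q ^ B)
        = (D * (ρ ^ T - q ^ T)) * (ρ ^ (B - b - 1) * q ^ b / (ρ ^ B - q ^ B)) := by
          ring
      _ ≤ (D * (ρ ^ T - q ^ (2 * T))) * (1 / (ρ - q)) := by
          apply mul_le_mul _ hfrac hfracnn hDTnn
          apply mul_le_mul_of_nonneg_left _ hDpos
          linarith
      _ = 2 * η * G * (ρ ^ T - q ^ (2 * T)) * (1 / (β * (ρ - q))) := by
          rw [hD]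
          field_simp
  calc e T ≤ c * ((ρ ^ T - q ^ T) / (ρ - q) - (ρ ^ T - q ^ (2 * T)) / (ρ - q ^ 2))
      + D * ρ ^ (B - b - 1) * q ^ b * (ρ ^ T - q ^ T) / (ρ ^ B - q ^ B) := hfirst
    _ ≤ 2 * η * G * (ρ ^ T - q ^ (2 * T)) * (η * q / ((ρ - q) * (ρ - q ^ 2)))
      + 2 * η * G * (ρ ^ T - q ^ (2 * T)) * (1 / (β * (ρ - q))) := add_le_add hA hBnd
    _ = 2 * η * G * (ρ ^ T - q ^ (2 * T)) *
        (η * q / ((ρ - q) * (ρ - q ^ 2)) + 1 / (β * (ρ - q))) := by ring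
end

section
/- Let η > 0, G ≥ 0, β > 0, B ≥ 1, E ≥ 0, T = (E+1)B ≥ 1, b < B, and let 0 < q < 1 and q < ρ < 1. Suppose e_1, …, e_m : ℕ → ℝ each satisfy e_j(0) = 0 and, for all t < T, e_j(t+1) ≤ ρ · e_j(t) + (2 η² G / (1 − q)) · (q^t − q^{2t}) + s_j(t), where s_j(t) = (2 η G / β) q^t if t mod B = b_j (for some fixed b_j < B) and 0 otherwise. Then Σ_{j=1}^m e_j(T) ≤ m · 2 η G · ( η q / ((ρ − q)(ρ − q²)) + 1/(β (ρ − q)) ) · ρ^T. -/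
private lemma unlearning_key_aux (c1 c2 ρ q A P Q : ℝ)
    (h1 : ρ - q ≠ 0) (h2 : ρ - q ^ 2 ≠ 0) :
    ρ * ((c1 + c2) * (A - P) / (ρ - q) - c1 * (A - Q) / (ρ - q ^ 2))
      + c1 * (P - Q) + c2 * P
    = (c1 + c2) * (ρ * A - q * P) / (ρ - q)
      - c1 * (ρ * A - Q * q ^ 2) / (ρ - q ^ 2) := by
  field_simp
  ring

/-- **Corollary 4.4.** Under the stepsize condition making `ρ < 1`, the total
approximation error for forgetting `m` samples is of order `O(m ρ^T)`. -/
theorem unlearning_guarantee_m_samples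
    (η G β : ℝ) (hη : 0 < η) (hG : 0 ≤ G) (hβ : 0 < β)
    (B E : ℕ) (hB : 1 ≤ B)
    (T : ℕ) (hT : T = (E + 1) * B) (hT1 : 1 ≤ T)
    (q ρ : ℝ) (hq0 : 0 < q) (hq1 : q < 1) (hqρ : q < ρ) (hρ1 : ρ < 1)
    (m : ℕ) (e : Fin m → ℕ → ℝ)
    (bj : Fin m → ℕ) (hbj : ∀ j, bj j < B)
    (he0 : ∀ j, e j 0 = 0)
    (hrec : ∀ j, ∀ t < T, e j (t + 1) ≤ ρ * e j t
      + (2 * η ^ 2 * G / (1 - q)) * (q ^ t - q ^ (2 * t))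
      + (if t % B = bj j then (2 * η * G / β) * q ^ t else 0)) :
    ∑ j : Fin m, e j T ≤
      (m : ℝ) * (2 * η * G) *
        (η * q / ((ρ - q) * (ρ - q ^ 2)) + 1 / (β * (ρ - q))) * ρ ^ T := by
  set C1 : ℝ := 2 * η ^ 2 * G / (1 - q) with hC1
  set C2 : ℝ := 2 * η * G / β with hC2
  have hq1' : (0:ℝ) < 1 - q := by linarith
  have hC1nn : 0 ≤ C1 := by
    apply div_nonneg _ (le_of_lt hq1')
    positivity
  have hC2nn : 0 ≤ C2 := by positivity
  have hρ0 : 0 < ρ := lt_trans hq0 hqρ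
  have hρq : 0 < ρ - q := by linarith
  have hq2 : q ^ 2 < q := by nlinarith
  have hρq2 : 0 < ρ - q ^ 2 := by nlinarith
  have hg : ∀ j : Fin m, ∀ t, t ≤ T →
      e j t ≤ (C1 + C2) * (ρ ^ t - q ^ t) / (ρ - q)
        - C1 * (ρ ^ t - q ^ (2 * t)) / (ρ - q ^ 2) := by
    intro j t
    induction t with
    | zero => intro _; simp [he0 j]
    | succ t ih =>
      intro ht
      have ht' : t < T := Nat.lt_of_succ_le ht
      have hih := ih (le_of_lt ht')
      have hrec' := hrec j t ht'
      have hs : (if t % B = bj j then (2 * η * G / β) * q ^ t else 0)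
          ≤ C2 * q ^ t := by
        split
        · exact le_of_eq rfl
        · positivity
      have key := unlearning_key_aux C1 C2 ρ q (ρ ^ t) (q ^ t) (q ^ (2 * t))
        hρq.ne' hρq2.ne'
      have h2 : q ^ (2 * (t + 1)) = q ^ (2 * t) * q ^ 2 := by
        rw [← pow_add]; ring_nf
      calc e j (t+1) ≤ ρ * e j t + C1 * (q ^ t - q ^ (2 * t))
            + (if t % B = bj j then (2 * η * G / β) * q ^ t else 0) := hrec'
        _ ≤ ρ * ((C1 + C2) * (ρ ^ t - q ^ t) / (ρ - q)
              - C1 * (ρ ^ t - q ^ (2 * t)) / (ρ - q ^ 2))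
            + C1 * (q ^ t - q ^ (2 * t)) + C2 * q ^ t := by
          gcongr
        _ = (C1 + C2) * (ρ * ρ ^ t - q * q ^ t) / (ρ - q)
            - C1 * (ρ * ρ ^ t - q ^ (2 * t) * q ^ 2) / (ρ - q ^ 2) := key
        _ = (C1 + C2) * (ρ ^ (t+1) - q ^ (t+1)) / (ρ - q)
            - C1 * (ρ ^ (t+1) - q ^ (2 * (t+1))) / (ρ - q ^ 2) := by
          rw [h2, pow_succ, pow_succ]; ring
  have hper : ∀ j : Fin m, e j T ≤
      (2 * η * G) * (η * q / ((ρ - q) * (ρ - q ^ 2)) + 1 / (β * (ρ - q))) * ρ ^ T := by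
    intro j
    have h1 := hg j T le_rfl
    have hqT : (0:ℝ) < q ^ T := pow_pos hq0 T
    have h2T : q ^ (2 * T) ≤ q ^ T := by
      apply pow_le_pow_of_le_one (le_of_lt hq0) (le_of_lt hq1)
      omega
    have hA : C1 * q ^ (2 * T) / (ρ - q ^ 2) ≤ C1 * q ^ T / (ρ - q) := by
      apply div_le_div₀ (by positivity) (by nlinarith) hρq (by nlinarith)
    have hB2 : C1 * q ^ T / (ρ - q) ≤ (C1 + C2) * q ^ T / (ρ - q) := by
      gcongr
      linarith
    have expand : (C1 + C2) * (ρ ^ T - q ^ T) / (ρ - q)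
        - C1 * (ρ ^ T - q ^ (2 * T)) / (ρ - q ^ 2)
        = ((C1 + C2) / (ρ - q) - C1 / (ρ - q ^ 2)) * ρ ^ T
          - ((C1 + C2) * q ^ T / (ρ - q) - C1 * q ^ (2 * T) / (ρ - q ^ 2)) := by
      ring
    have coeff : ((C1 + C2) / (ρ - q) - C1 / (ρ - q ^ 2))
        = (2 * η * G) * (η * q / ((ρ - q) * (ρ - q ^ 2)) + 1 / (β * (ρ - q))) := by
      rw [hC1, hC2]
      field_simp
      ring
    calc e j T ≤ (C1 + C2) * (ρ ^ T - q ^ T) / (ρ - q)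
          - C1 * (ρ ^ T - q ^ (2 * T)) / (ρ - q ^ 2) := h1
      _ = ((C1 + C2) / (ρ - q) - C1 / (ρ - q ^ 2)) * ρ ^ T
          - ((C1 + C2) * q ^ T / (ρ - q) - C1 * q ^ (2 * T) / (ρ - q ^ 2)) := expand
      _ ≤ ((C1 + C2) / (ρ - q) - C1 / (ρ - q ^ 2)) * ρ ^ T := by linarith
      _ = (2 * η * G) * (η * q / ((ρ - q) * (ρ - q ^ 2)) + 1 / (β * (ρ - q))) * ρ ^ T := by
        rw [coeff]
  calc ∑ j : Fin m, e j T ≤ ∑ _j : Fin m,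
        (2 * η * G) * (η * q / ((ρ - q) * (ρ - q ^ 2)) + 1 / (β * (ρ - q))) * ρ ^ T :=
      Finset.sum_le_sum (fun j _ => hper j)
    _ = (m : ℝ) * ((2 * η * G) * (η * q / ((ρ - q) * (ρ - q ^ 2)) + 1 / (β * (ρ - q))) * ρ ^ T) := by
      rw [Finset.sum_const, Finset.card_univ, Fintype.card_fin, nsmul_eq_mul]
    _ = _ := by ring
end

section
/- Let L, λ, η, G, ε, δ, ρ, γ be positive reals with 0 < δ < 1, 0 < ρ < 1, let d ≥ 1, let K ≥ 0 be a real number, and let n, m be natural numbers with 1 ≤ m and 2m ≤ n. Suppose γ > 8L²/(λ n) + ρ^K · 2L²/λ and m ≤ ε (γ − 8L²/(λ n) − ρ^K · 2L²/λ) / (2 L η G √d √(ln(1/δ)) · ρ^K). Then 4L²/(λ(n − m)) + ρ^K ( 2L²/λ + 2 m L η G √d √(ln(1/δ)) / ε ) ≤ γ. -/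
/-! Since `n ≥ 2m`, the `1/(n - m)` term is at most the `2/n` term of the hypothesis, and the
bound on `m` says exactly that the noise term `ρ^K · 2mLηG√d√(ln(1/δ))/ε` fits into the
remaining gap `γ - 8L²/(λn) - ρ^K · 2L²/λ`. -/

lemma div_sub_le_two_mul_div {c n m : ℝ} (hc : 0 ≤ c) (hm : 0 ≤ m) (hnm : 2 * m ≤ n) :
    c / (n - m) ≤ 2 * c / n := by
  rcases (show 0 ≤ n - m by linarith).eq_or_lt with hzero | hpos
  · rw [← hzero, div_zero, show n = 0 by linarith, div_zero]
  · rw [div_le_div_iff₀ hpos (by linarith)]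
    nlinarith

lemma mul_div_le_of_le_mul_div {m y ε g : ℝ} (hm : 0 ≤ m) (hy : 0 ≤ y) (hg : 0 ≤ g)
    (h : m ≤ ε * g / y) : m * y / ε ≤ g := by
  rcases le_or_gt ε 0 with hε | hε
  · exact (div_nonpos_of_nonneg_of_nonpos (mul_nonneg hm hy) hε).trans hg
  rcases hy.eq_or_lt with rfl | hy
  · simpa using hg
  rw [div_le_iff₀ hε]
  rw [le_div_iff₀ hy] at h
  linarith

theorem deletion_capacity_general
    (L lam η G ε δ ρ γ : ℝ)
    (hL : 0 < L) (hlam : 0 < lam) (hη : 0 < η) (hG : 0 < G)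
    (hρ0 : 0 < ρ)
    (d : ℕ) (K : ℝ)
    (n m : ℕ) (hnm : 2 * m ≤ n)
    (hgap : 8 * L ^ 2 / (lam * n) + ρ ^ K * (2 * L ^ 2 / lam) < γ)
    (hmle : (m : ℝ) ≤
      ε * (γ - 8 * L ^ 2 / (lam * n) - ρ ^ K * (2 * L ^ 2 / lam)) /
        (2 * L * η * G * Real.sqrt d * Real.sqrt (Real.log (1 / δ)) * ρ ^ K)) :
    4 * L ^ 2 / (lam * ((n : ℝ) - m)) +
      ρ ^ K * (2 * L ^ 2 / lam +
        2 * m * L * η * G * Real.sqrt d * Real.sqrt (Real.log (1 / δ)) / ε) ≤ γ := by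
  have hnm' : 2 * (m : ℝ) ≤ n := by exact_mod_cast hnm
  have hsample : 4 * L ^ 2 / (lam * ((n : ℝ) - m)) ≤ 8 * L ^ 2 / (lam * n) :=
    calc 4 * L ^ 2 / (lam * ((n : ℝ) - m)) = 4 * L ^ 2 / lam / ((n : ℝ) - m) := by
          rw [div_mul_eq_div_div]
      _ ≤ 2 * (4 * L ^ 2 / lam) / n := div_sub_le_two_mul_div (by positivity) m.cast_nonneg hnm'
      _ = 8 * L ^ 2 / (lam * n) := by ring
  have hnoise : ρ ^ K * (2 * m * L * η * G * Real.sqrt d * Real.sqrt (Real.log (1 / δ)) / ε) ≤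
      γ - 8 * L ^ 2 / (lam * n) - ρ ^ K * (2 * L ^ 2 / lam) := by
    have hρK : 0 ≤ ρ ^ K := Real.rpow_nonneg hρ0.le K
    convert mul_div_le_of_le_mul_div m.cast_nonneg (by positivity) (by linarith) hmle using 1
    ring
  linarith

/-- **Deletion Capacity Guarantee** (algebraic content of Theorem B.3): if the
number `m` of deleted samples is small enough, the excess population-risk bound
of the unlearned model stays below the target level `γ`. -/
theorem deletion_capacity
    (L lam η G ε δ ρ γ : ℝ)
    (hL : 0 < L) (hlam : 0 < lam) (hη : 0 < η) (hG : 0 < G)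
    (hε : 0 < ε) (hδ0 : 0 < δ) (hδ1 : δ < 1) (hρ0 : 0 < ρ) (hρ1 : ρ < 1)
    (hγ : 0 < γ)
    (d : ℕ) (hd : 1 ≤ d) (K : ℝ) (hK : 0 ≤ K)
    (n m : ℕ) (hm : 1 ≤ m) (hnm : 2 * m ≤ n)
    (hgap : 8 * L ^ 2 / (lam * n) + ρ ^ K * (2 * L ^ 2 / lam) < γ)
    (hmle : (m : ℝ) ≤
      ε * (γ - 8 * L ^ 2 / (lam * n) - ρ ^ K * (2 * L ^ 2 / lam)) /
        (2 * L * η * G * Real.sqrt d * Real.sqrt (Real.log (1 / δ)) * ρ ^ K)) :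
    4 * L ^ 2 / (lam * ((n : ℝ) - m)) +
      ρ ^ K * (2 * L ^ 2 / lam +
        2 * m * L * η * G * Real.sqrt d * Real.sqrt (Real.log (1 / δ)) / ε) ≤ γ :=
  deletion_capacity_general L lam η G ε δ ρ γ hL hlam hη hG hρ0 d K n m hnm hgap hmle
end
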